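/- arXiv:0903.0316 — 2 statements merged into one kernel-verified Lean document; each statement's English description precedes it below -/
import Mathlib

section
/- With Γ, Γ', Σ, Σ', G as above, for all k, l ≥ 0 the coupling rates satisfy the recursion: for k,l ≥ 1, G(k,l) = (Γ_k − Σ_{l'>l} G(k,l')) ∧ (Γ'_l − Σ_{k'>k} G(k',l)); G(0,l) = Γ'_l − Σ_{k'>0} G(k',l); G(k,0) = Γ_k − Σ_{l'>0} G(k,l'); G(0,0) = 0. -/
/-!
Write `φ_k(t) = Γ_k ∧ (t - Σ_k)⁺`. Since `Σ'_{l-1} = Σ'_l + Γ'_l`, the defining formula of the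
coupling rates says exactly `G(k,l) = φ_k(Σ'_{l-1}) - φ_k(Σ'_l)`. As `φ_k` is monotone and
`Σ'_l ↓ 0`, the row tail `∑_{l'>l} G(k,l')` telescopes to `φ_k(Σ'_l)`, and symmetrically the column
tail `∑_{k'>k} G(k',l)` equals `Γ'_l ∧ (Σ_k - Σ'_l)⁺`. Substituting both tails turns the
defining formula into the recursion.
-/

open Filter Topology

noncomputable section

def tailSum (Γ : ℕ → ℝ) (k : ℕ) : ℝ := ∑' i, if k < i then Γ i else 0

/-- `couplingRate Γ_k Γ'_l Σ_k Σ'_l` is `G(k,l)`; note `t - min s t = (t - s)⁺`. -/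
def couplingRate (A B s t : ℝ) : ℝ := min (A - min A (t - min s t)) (B - min B (s - min s t))

end

section tailSum

variable {Γ : ℕ → ℝ}

theorem summable_ite_lt (hΓ : Summable Γ) (k : ℕ) : Summable fun i => if k < i then Γ i else 0 :=
  (hΓ.indicator {i | k < i}).congr fun i => by simp [Set.indicator_apply]

theorem tailSum_eq_add_tailSum_succ (hΓ : Summable Γ) (k : ℕ) :
    tailSum Γ k = Γ (k + 1) + tailSum Γ (k + 1) := by
  rw [tailSum, (summable_ite_lt hΓ k).tsum_eq_add_tsum_ite (k + 1), if_pos k.lt_succ_self, tailSum]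
  congr 1
  refine tsum_congr fun i => ?_
  split_ifs <;> first | rfl | omega

theorem tailSum_nonneg (hΓ : ∀ i, 0 ≤ Γ i) (k : ℕ) : 0 ≤ tailSum Γ k :=
  tsum_nonneg fun i => by split_ifs <;> simp [hΓ i]

theorem antitone_tailSum (hΓ : ∀ i, 0 ≤ Γ i) (hΓs : Summable Γ) : Antitone (tailSum Γ) :=
  antitone_nat_of_succ_le fun k => by linarith [tailSum_eq_add_tailSum_succ hΓs k, hΓ (k + 1)]

theorem tendsto_tailSum_atTop (hΓ : Summable Γ) : Tendsto (tailSum Γ) atTop (𝓝 0) := by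
  have h := tendsto_tsum_of_dominated_convergence (f := fun k i => if k < i then Γ i else 0)
    (g := fun _ => 0) hΓ.abs
    (fun i => tendsto_const_nhds.congr' <|
      (eventually_ge_atTop i).mono fun k hk => (if_neg hk.not_gt).symm)
    (Eventually.of_forall fun k i => by split_ifs <;> simp)
  rwa [tsum_zero] at h

end tailSum

theorem couplingRate_comm (A B s t : ℝ) : couplingRate A B s t = couplingRate B A t s := by
  rw [couplingRate, couplingRate, min_comm, min_comm t s]

theorem couplingRate_eq_sub_of_nonneg {A B s t : ℝ} (hB : 0 ≤ B) :
    couplingRate A B s t = min A (t + B - min s (t + B)) - min A (t - min s t) := by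
  simp only [couplingRate, min_def]; split_ifs <;> linarith

theorem hasSum_sub_succ_of_antitone {f : ℕ → ℝ} (hf : Antitone f)
    (hlim : Tendsto f atTop (𝓝 0)) : HasSum (fun n => f n - f (n + 1)) (f 0) := by
  rw [hasSum_iff_tendsto_nat_of_nonneg (fun n => sub_nonneg.2 (hf n.le_succ))]
  simp_rw [Finset.sum_range_sub']
  simpa using tendsto_const_nhds.sub hlim

theorem hasSum_ite_lt_of_eq_sub_succ {f g : ℕ → ℝ} (hf : Antitone f) (hlim : Tendsto f atTop (𝓝 0))
    (hg : ∀ m, g (m + 1) = f m - f (m + 1)) (l : ℕ) :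
    HasSum (fun i => if l < i then g i else 0) (f l) := by
  rw [← hasSum_nat_add_iff' (l + 1), Finset.sum_eq_zero fun i hi => if_neg (by simpa using hi),
    sub_zero]
  have h := hasSum_sub_succ_of_antitone (f := fun n => f (n + l))
    (hf.comp_monotone fun _ _ h => Nat.add_le_add_right h l) (hlim.comp (tendsto_add_atTop_nat l))
  rw [zero_add] at h
  refine h.congr_fun fun n => ?_
  rw [if_pos (by omega), ← add_assoc, hg, add_right_comm]

theorem hasSum_couplingRate_tailSum {A s : ℝ} {B : ℕ → ℝ} (hA : 0 ≤ A) (hs : 0 ≤ s)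
    (hB : ∀ i, 0 ≤ B i) (hBs : Summable B) (l : ℕ) :
    HasSum (fun i => if l < i then couplingRate A (B i) s (tailSum B i) else 0)
      (min A (tailSum B l - min s (tailSum B l))) := by
  set φ : ℝ → ℝ := fun t => min A (t - min s t)
  have hφ : Monotone φ := fun a b hab =>
    min_le_min_left _ (by simp only [min_def]; split_ifs <;> linarith)
  have hφ0 : φ 0 = 0 := by simp [φ, hs, hA]
  refine hasSum_ite_lt_of_eq_sub_succ (f := φ ∘ tailSum B)
    (hφ.comp_antitone (antitone_tailSum hB hBs)) ?_ (fun m => ?_) l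
  · rw [← hφ0]
    exact ((by fun_prop : Continuous φ).tendsto 0).comp (tendsto_tailSum_atTop hBs)
  · rw [couplingRate_eq_sub_of_nonneg (hB _), Function.comp_apply, Function.comp_apply,
      tailSum_eq_add_tailSum_succ hBs m, add_comm (B _)]

/-- The coupling rates satisfy the recursion relations. -/
theorem stmt9 (Γ Γ' : ℕ → ℝ) (hΓ : ∀ k, 0 ≤ Γ k) (hΓ' : ∀ l, 0 ≤ Γ' l)
    (hsum : Summable Γ) (hsum' : Summable Γ')
    (Sa Sb : ℕ → ℝ)
    (hSa : ∀ k, Sa k = ∑' k' : ℕ, if k < k' then Γ k' else 0)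
    (hSb : ∀ l, Sb l = ∑' l' : ℕ, if l < l' then Γ' l' else 0)
    (G : ℕ → ℕ → ℝ)
    (hG : ∀ k l, 1 ≤ k → 1 ≤ l → G k l =
      min (Γ k - min (Γ k) (Sb l - min (Sa k) (Sb l)))
          (Γ' l - min (Γ' l) (Sa k - min (Sa k) (Sb l))))
    (hGk0 : ∀ k, 1 ≤ k → G k 0 = Γ k - min (Γ k) (Sb 0 - min (Sa k) (Sb 0)))
    (hG0l : ∀ l, 1 ≤ l → G 0 l = Γ' l - min (Γ' l) (Sa 0 - min (Sa 0) (Sb l)))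
    (hG00 : G 0 0 = 0) :
    (∀ k l, 1 ≤ k → 1 ≤ l → G k l =
        min (Γ k - ∑' l' : ℕ, if l < l' then G k l' else 0)
            (Γ' l - ∑' k' : ℕ, if k < k' then G k' l else 0)) ∧
    (∀ l, 1 ≤ l → G 0 l = Γ' l - ∑' k' : ℕ, if 0 < k' then G k' l else 0) ∧
    (∀ k, 1 ≤ k → G k 0 = Γ k - ∑' l' : ℕ, if 0 < l' then G k l' else 0) ∧
    G 0 0 = 0 := by
  obtain rfl : Sa = tailSum Γ := funext hSa
  obtain rfl : Sb = tailSum Γ' := funext hSb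
  have hrow : ∀ k, 1 ≤ k → ∀ l, HasSum (fun i => if l < i then G k i else 0)
      (min (Γ k) (tailSum Γ' l - min (tailSum Γ k) (tailSum Γ' l))) := fun k hk l =>
    (hasSum_couplingRate_tailSum (hΓ k) (tailSum_nonneg hΓ k) hΓ' hsum' l).congr_fun fun i => by
      split_ifs with hi
      exacts [hG k i hk (by omega), rfl]
  have hcol : ∀ l, 1 ≤ l → ∀ k, HasSum (fun i => if k < i then G i l else 0)
      (min (Γ' l) (tailSum Γ k - min (tailSum Γ' l) (tailSum Γ k))) := fun l hl k =>
    (hasSum_couplingRate_tailSum (hΓ' l) (tailSum_nonneg hΓ' l) hΓ hsum k).congr_fun fun i => by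
      split_ifs with hi
      exacts [(hG i l (by omega) hl).trans (couplingRate_comm _ _ _ _), rfl]
  refine ⟨fun k l hk hl => ?_, fun l hl => ?_, fun k hk => ?_, hG00⟩
  · rw [(hrow k hk l).tsum_eq, (hcol l hl k).tsum_eq, hG k l hk hl,
      min_comm (tailSum Γ' l) (tailSum Γ k)]
  · rw [(hcol l hl 0).tsum_eq, hG0l l hl, min_comm (tailSum Γ' l)]
  · rw [(hrow k hk 0).tsum_eq, hGk0 k hk]
end

section
/- With Γ, Γ', Σ, Σ' and a solution G of the coupling recursion as above: if Σ_k ≥ Σ'_l then G(k',l') = 0 for all k' ≤ k and l' > l; and if Σ_k < Σ'_l then G(k',l') = 0 for all k' > k and l' ≤ l. -/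
/-!
If the minimum defining `G k l` (with `k, l ≥ 1`) is attained by its row term, the row sum
`Γ k` forces every entry of row `k` left of column `l` to vanish; if it is attained by the column
term, every entry of column `l` below row `k` vanishes. Hence `G` has no two nonzero entries
`(k₁, l₁)`, `(k₂, l₂)` with `k₁ < k₂` and `l₂ < l₁`. Counting the mass of `G` on the quadrants cut
out by `(k, l)` gives `Σ'_l - Σ_k = G(k' ≤ k, l' > l) - G(k' > k, l' ≤ l)`, and at most one of
these two quadrant masses is nonzero.
-/

open Function

section Summation

variable {E : Type*} [AddCommGroup E] [UniformSpace E] [IsUniformAddGroup E] [CompleteSpace E]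

theorem Summable.ite_zero {α : Type*} {f : α → E} (hf : Summable f) (P : α → Prop)
    [DecidablePred P] : Summable fun a => if P a then f a else 0 := by
  convert hf.indicator {a | P a} using 1
  ext a
  simp [Set.indicator_apply]

variable [T2Space E]

theorem Summable.tsum_eq_sum_range_add_tsum_ite {f : ℕ → E} (hf : Summable f) (n : ℕ) :
    ∑' m, f m = ∑ m ∈ Finset.range (n + 1), f m + ∑' m, if n < m then f m else 0 := by
  rw [← hf.sum_add_tsum_nat_add (n + 1), ← (hf.ite_zero (n < ·)).sum_add_tsum_nat_add (n + 1)]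
  simp [Finset.sum_ite_of_false, show ∀ i, n < i + (n + 1) by omega]

theorem Summable.tsum_ite_fst {α β : Type*} {f : α × β → E} (hf : Summable f) (P : α → Prop)
    [DecidablePred P] :
    ∑' p, (if P p.1 then f p else 0) = ∑' a, if P a then ∑' b, f (a, b) else 0 := by
  rw [(hf.ite_zero (P ·.1)).tsum_prod' fun a => (hf.ite_zero (P ·.1)).prod_factor a]
  congr 1 with a
  split_ifs <;> simp

theorem Summable.tsum_ite_snd {α β : Type*} {f : α × β → E} (hf : Summable f) (P : β → Prop)
    [DecidablePred P] :
    ∑' p, (if P p.2 then f p else 0) = ∑' b, if P b then ∑' a, f (a, b) else 0 := by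
  calc ∑' p, (if P p.2 then f p else 0)
      = ∑' p : β × α, if P p.1 then f p.swap else 0 := ((Equiv.prodComm β α).tsum_eq _).symm
    _ = _ := hf.prod_symm.tsum_ite_fst P

end Summation

structure SolvesCouplingRecursion (Γ Γ' : ℕ → ℝ) (G : ℕ → ℕ → ℝ) : Prop where
  nonneg : ∀ k l, 0 ≤ G k l
  eq_min : ∀ k l, 1 ≤ k → 1 ≤ l → G k l =
    min (Γ k - ∑' l' : ℕ, if l < l' then G k l' else 0)
      (Γ' l - ∑' k' : ℕ, if k < k' then G k' l else 0)
  row_zero : ∀ l, 1 ≤ l → G 0 l = Γ' l - ∑' k' : ℕ, if 0 < k' then G k' l else 0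
  col_zero : ∀ k, 1 ≤ k → G k 0 = Γ k - ∑' l' : ℕ, if 0 < l' then G k l' else 0

namespace SolvesCouplingRecursion

variable {Γ Γ' : ℕ → ℝ} {G : ℕ → ℕ → ℝ}

theorem swap (h : SolvesCouplingRecursion Γ Γ' G) :
    SolvesCouplingRecursion Γ' Γ (swap G) where
  nonneg l k := h.nonneg k l
  eq_min l k hl hk := (h.eq_min k l hk hl).trans (min_comm _ _)
  row_zero := h.col_zero
  col_zero := h.row_zero

theorem tsum_ite_nonneg (h : SolvesCouplingRecursion Γ Γ' G) (k : ℕ) (P : ℕ → Prop)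
    [DecidablePred P] : 0 ≤ ∑' l, if P l then G k l else 0 :=
  tsum_nonneg fun l => by split_ifs <;> simp [h.nonneg]

theorem le_col_marginal (h : SolvesCouplingRecursion Γ Γ' G) (k : ℕ) {l : ℕ} (hl : 1 ≤ l) :
    G k l ≤ Γ' l := by
  have htail := h.swap.tsum_ite_nonneg l (k < ·)
  rcases Nat.eq_zero_or_pos k with rfl | hk
  · linarith [h.row_zero l hl]
  · rw [h.eq_min k l hk hl]
    exact (min_le_right _ _).trans (by linarith)

theorem summable_row (h : SolvesCouplingRecursion Γ Γ' G) (hΓ' : Summable Γ') (k : ℕ) :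
    Summable (G k) :=
  (summable_nat_add_iff 1).mp <| ((summable_nat_add_iff 1).mpr hΓ').of_nonneg_of_le
    (fun l => h.nonneg k _) fun l => h.le_col_marginal k (by omega)

theorem tsum_row (h : SolvesCouplingRecursion Γ Γ' G) (hΓ' : Summable Γ') {k : ℕ} (hk : 1 ≤ k) :
    ∑' l, G k l = Γ k := by
  rw [(h.summable_row hΓ' k).tsum_eq_sum_range_add_tsum_ite 0, zero_add, Finset.sum_range_one,
    h.col_zero k hk, sub_add_cancel]

theorem eq_zero_of_eq_row_tail (h : SolvesCouplingRecursion Γ Γ' G) (hΓ' : Summable Γ')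
    {k l : ℕ} (hk : 1 ≤ k) (hrow : G k l = Γ k - ∑' l' : ℕ, if l < l' then G k l' else 0)
    {m : ℕ} (hm : m < l) : G k m = 0 := by
  have hsplit := (h.summable_row hΓ' k).tsum_eq_sum_range_add_tsum_ite l
  rw [h.tsum_row hΓ' hk, Finset.sum_range_succ] at hsplit
  have hhead : ∑ m ∈ Finset.range l, G k m = 0 := by linarith
  exact (Finset.sum_eq_zero_iff_of_nonneg fun m _ => h.nonneg k m).mp hhead m
    (Finset.mem_range.mpr hm)

theorem eq_zero_or_eq_zero_of_lt_of_lt (h : SolvesCouplingRecursion Γ Γ' G) (hΓ : Summable Γ)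
    (hΓ' : Summable Γ') {k₁ k₂ l₁ l₂ : ℕ} (hk : k₁ < k₂) (hl : l₂ < l₁) :
    G k₁ l₁ = 0 ∨ G k₂ l₂ = 0 := by
  rcases min_choice (Γ k₂ - ∑' l' : ℕ, if l₁ < l' then G k₂ l' else 0)
      (Γ' l₁ - ∑' k' : ℕ, if k₂ < k' then G k' l₁ else 0) with hrow | hcol
  · exact .inr <| h.eq_zero_of_eq_row_tail hΓ' (by omega)
      ((h.eq_min k₂ l₁ (by omega) (by omega)).trans hrow) hl
  · exact .inl <| h.swap.eq_zero_of_eq_row_tail hΓ (k := l₁) (by omega)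
      ((h.eq_min k₂ l₁ (by omega) (by omega)).trans hcol) hk

theorem summable_uncurry (h : SolvesCouplingRecursion Γ Γ' G) (hΓ : Summable Γ)
    (hΓ' : Summable Γ') : Summable (uncurry G) := by
  refine (summable_prod_of_nonneg fun p => h.nonneg p.1 p.2).mpr ⟨h.summable_row hΓ', ?_⟩
  refine (summable_nat_add_iff 1).mp ?_
  simpa only [uncurry_apply_pair, h.tsum_row hΓ' (Nat.le_add_left 1 _)]
    using (summable_nat_add_iff 1).mpr hΓ

theorem tsum_tail_lt_of_ne_zero (h : SolvesCouplingRecursion Γ Γ' G) (hΓ : Summable Γ)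
    (hΓ' : Summable Γ') {k l k₁ l₁ : ℕ} (hk₁ : k₁ ≤ k) (hl₁ : l < l₁) (hne : G k₁ l₁ ≠ 0) :
    (∑' k', if k < k' then Γ k' else 0) < ∑' l', if l < l' then Γ' l' else 0 := by
  set g := uncurry G
  have hg := h.summable_uncurry hΓ hΓ'
  have hrows : (∑' k', if k < k' then Γ k' else 0) = ∑' p, if k < p.1 then g p else 0 := by
    rw [hg.tsum_ite_fst]
    refine tsum_congr fun k' => ?_
    split_ifs with hk'
    · exact (h.tsum_row hΓ' (by omega)).symm
    · rfl
  have hcols : (∑' l', if l < l' then Γ' l' else 0) = ∑' p, if l < p.2 then g p else 0 := by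
    rw [hg.tsum_ite_snd]
    refine tsum_congr fun l' => ?_
    split_ifs with hl'
    · exact (h.swap.tsum_row hΓ (by omega)).symm
    · rfl
  -- both sides are the mass of `G` on `{p | l < p.2 ∨ k < p.1}`
  have hbalance : (∑' p, if l < p.2 then g p else 0) + ∑' p, (if k < p.1 ∧ p.2 ≤ l then g p else 0)
      = (∑' p, if k < p.1 then g p else 0) + ∑' p, if p.1 ≤ k ∧ l < p.2 then g p else 0 := by
    rw [← (hg.ite_zero _).tsum_add (hg.ite_zero _), ← (hg.ite_zero _).tsum_add (hg.ite_zero _)]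
    refine tsum_congr fun p => ?_
    split_ifs <;> first | (exfalso; omega) | simp
  have hmass₂ : ∑' p, (if k < p.1 ∧ p.2 ≤ l then g p else 0) = 0 := by
    refine (tsum_congr fun p => ?_).trans tsum_zero
    split_ifs with hp
    · exact (h.eq_zero_or_eq_zero_of_lt_of_lt hΓ hΓ' (k₂ := p.1) (l₂ := p.2) (by omega)
        (by omega)).resolve_left hne
    · rfl
  have hmass₁ : 0 < ∑' p, if p.1 ≤ k ∧ l < p.2 then g p else 0 := by
    refine (hg.ite_zero _).tsum_pos (fun p => ?_) (k₁, l₁) ?_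
    · split_ifs
      exacts [h.nonneg _ _, le_rfl]
    · rw [if_pos ⟨hk₁, hl₁⟩]
      exact (h.nonneg k₁ l₁).lt_of_ne' hne
  linarith

end SolvesCouplingRecursion

theorem stmt11_general (Γ Γ' : ℕ → ℝ)
    (hsum : Summable Γ) (hsum' : Summable Γ')
    (Sa Sb : ℕ → ℝ)
    (hSa : ∀ k, Sa k = ∑' k' : ℕ, if k < k' then Γ k' else 0)
    (hSb : ∀ l, Sb l = ∑' l' : ℕ, if l < l' then Γ' l' else 0)
    (G : ℕ → ℕ → ℝ) (hGpos : ∀ k l, 0 ≤ G k l)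
    (hG : ∀ k l, 1 ≤ k → 1 ≤ l → G k l =
        min (Γ k - ∑' l' : ℕ, if l < l' then G k l' else 0)
            (Γ' l - ∑' k' : ℕ, if k < k' then G k' l else 0))
    (hG0l : ∀ l, 1 ≤ l → G 0 l = Γ' l - ∑' k' : ℕ, if 0 < k' then G k' l else 0)
    (hGk0 : ∀ k, 1 ≤ k → G k 0 = Γ k - ∑' l' : ℕ, if 0 < l' then G k l' else 0) :
    ∀ k l : ℕ,
      (Sb l ≤ Sa k → ∀ k' l' : ℕ, k' ≤ k → l < l' → G k' l' = 0) ∧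
      (Sa k < Sb l → ∀ k' l' : ℕ, k < k' → l' ≤ l → G k' l' = 0) := by
  have h : SolvesCouplingRecursion Γ Γ' G := ⟨hGpos, hG, hG0l, hGk0⟩
  intro k l
  refine ⟨fun hle k₁ l₁ hk₁ hl₁ => ?_, fun hlt k₂ l₂ hk₂ hl₂ => ?_⟩
  · by_contra hne
    have hlt := h.tsum_tail_lt_of_ne_zero hsum hsum' hk₁ hl₁ hne
    rw [← hSa, ← hSb] at hlt
    exact hle.not_gt hlt
  · by_contra hne
    have hgt := h.swap.tsum_tail_lt_of_ne_zero hsum' hsum hl₂ hk₂ hne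
    rw [← hSa, ← hSb] at hgt
    exact hlt.not_gt hgt

/-- Support restrictions for any nonnegative solution of the coupling recursion. -/
theorem stmt11 (Γ Γ' : ℕ → ℝ) (hΓ : ∀ k, 0 ≤ Γ k) (hΓ' : ∀ l, 0 ≤ Γ' l)
    (hsum : Summable Γ) (hsum' : Summable Γ')
    (Sa Sb : ℕ → ℝ)
    (hSa : ∀ k, Sa k = ∑' k' : ℕ, if k < k' then Γ k' else 0)
    (hSb : ∀ l, Sb l = ∑' l' : ℕ, if l < l' then Γ' l' else 0)
    (G : ℕ → ℕ → ℝ) (hGpos : ∀ k l, 0 ≤ G k l)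
    (hG : ∀ k l, 1 ≤ k → 1 ≤ l → G k l =
        min (Γ k - ∑' l' : ℕ, if l < l' then G k l' else 0)
            (Γ' l - ∑' k' : ℕ, if k < k' then G k' l else 0))
    (hG0l : ∀ l, 1 ≤ l → G 0 l = Γ' l - ∑' k' : ℕ, if 0 < k' then G k' l else 0)
    (hGk0 : ∀ k, 1 ≤ k → G k 0 = Γ k - ∑' l' : ℕ, if 0 < l' then G k l' else 0)
    (hG00 : G 0 0 = 0) :
    ∀ k l : ℕ,
      (Sb l ≤ Sa k → ∀ k' l' : ℕ, k' ≤ k → l < l' → G k' l' = 0) ∧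
      (Sa k < Sb l → ∀ k' l' : ℕ, k < k' → l' ≤ l → G k' l' = 0) :=
  stmt11_general Γ Γ' hsum hsum' Sa Sb hSa hSb G hGpos hG hG0l hGk0
end
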